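/- arXiv:2109.11839 — 2 statements merged into one kernel-verified Lean document; each statement's English description precedes it below -/
import Mathlib

section
/- (F-pooling is anti-aliasing) For every x ∈ ℂ^n and every index k with μ ≤ k < n − μ, the k-th DFT coefficient of the F-pooled-and-reconstructed signal vanishes: (F_n (P̄ P x))_k = 0. -/
open Matrix Complex Finset

/-- The (unnormalized) DFT matrix: entries exp(-2πi·jk/n). -/
noncomputable def dftMatrix (n : ℕ) : Matrix (Fin n) (Fin n) ℂ :=
  Matrix.of fun j k =>
    Complex.exp (-2 * (Real.pi : ℂ) * Complex.I * ((j.val : ℂ) * (k.val : ℂ)) / (n : ℂ))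

/-- Selection matrix keeping the first μ and last (m−μ) coordinate rows. -/
def selD (n m μ : ℕ) : Matrix (Fin m) (Fin n) ℂ :=
  Matrix.of fun j k =>
    if (j.val < μ ∧ k.val = j.val) ∨ (μ ≤ j.val ∧ k.val = j.val + n - m) then 1 else 0

/-- Diagonal projection keeping the first μ and last μ coordinates. -/
def selL (n μ : ℕ) : Matrix (Fin n) (Fin n) ℂ :=
  Matrix.diagonal fun k => if k.val < μ ∨ n - μ ≤ k.val then 1 else 0

/-- F-pooling matrix P = (1/n) F_m* D_μ F_n. -/
noncomputable def fpool (n m μ : ℕ) : Matrix (Fin m) (Fin n) ℂ :=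
  (1 / (n : ℂ)) • ((dftMatrix m)ᴴ * selD n m μ * dftMatrix n)

/-- Inverse F-pooling matrix P̄ = (1/m) F_n* U_μ F_m with U_μ = D_μᵀ. -/
noncomputable def fpoolInv (n m μ : ℕ) : Matrix (Fin n) (Fin m) ℂ :=
  (1 / (m : ℂ)) • ((dftMatrix n)ᴴ * (selD n m μ)ᵀ * dftMatrix m)

/-- Low-frequency component x_l = (1/n) F_n* L_μ F_n x. -/
noncomputable def lowFreq (n μ : ℕ) (x : Fin n → ℂ) : Fin n → ℂ :=
  (1 / (n : ℂ)) • ((dftMatrix n)ᴴ *ᵥ (selL n μ *ᵥ (dftMatrix n *ᵥ x)))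

/-- Circular shift by t pixels: (S_t x)_k = x_{(k−t) mod n}. -/
def shift {n : ℕ} (t : ℤ) (x : Fin n → ℂ) : Fin n → ℂ :=
  fun k => x ⟨(((k.val : ℤ) - t) % (n : ℤ)).toNat, by
    have hn : (0 : ℤ) < (n : ℤ) := by exact_mod_cast k.pos
    have h2 : ((k.val : ℤ) - t) % (n : ℤ) < (n : ℤ) := Int.emod_lt_of_pos _ hn
    have h1 : 0 ≤ ((k.val : ℤ) - t) % (n : ℤ) := Int.emod_nonneg _ (by omega)
    omega⟩

lemma dft_mul_conjT (n : ℕ) (hn : 0 < n) :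
    dftMatrix n * (dftMatrix n)ᴴ = (n : ℂ) • 1 := by
  ext j l
  have hne : (n : ℂ) ≠ 0 := Nat.cast_ne_zero.mpr hn.ne'
  have hterm : ∀ i : Fin n,
      dftMatrix n j i * star (dftMatrix n l i)
        = Complex.exp (2 * (Real.pi : ℂ) * Complex.I * ((l.val : ℂ) - (j.val : ℂ)) / n) ^ (i : ℕ) := by
    intro i
    have hstar : star (Complex.exp (-2 * (Real.pi : ℂ) * Complex.I * ((l.val : ℂ) * (i.val : ℂ)) / (n : ℂ)))
        = Complex.exp (2 * (Real.pi : ℂ) * Complex.I * ((l.val : ℂ) * (i.val : ℂ)) / (n : ℂ)) := by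
      rw [Complex.star_def, ← Complex.exp_conj]
      congr 1
      simp only [map_div₀, _root_.map_mul, map_neg, map_ofNat, Complex.conj_I,
        Complex.conj_ofReal, map_natCast]
      ring
    simp only [dftMatrix, Matrix.of_apply, hstar, ← Complex.exp_nat_mul, ← Complex.exp_add]
    congr 1
    field_simp
    ring
  rw [Matrix.mul_apply]
  simp only [conjTranspose_apply, hterm]
  rw [Fin.sum_univ_eq_sum_range (fun i => _ ^ i)]
  by_cases hjl : j = l
  · subst hjl
    simp [Matrix.one_apply]
  · have hζn : (Complex.exp (2 * (Real.pi : ℂ) * Complex.I * ((l.val : ℂ) - (j.val : ℂ)) / n)) ^ n = 1 := by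
      rw [← Complex.exp_nat_mul]
      have : (n : ℂ) * (2 * (Real.pi : ℂ) * Complex.I * ((l.val : ℂ) - (j.val : ℂ)) / n)
          = ((l.val : ℤ) - (j.val : ℤ)) * (2 * (Real.pi : ℂ) * Complex.I) := by
        push_cast; field_simp
      rw [this]
      exact_mod_cast Complex.exp_int_mul_two_pi_mul_I _
    have hζ1 : (Complex.exp (2 * (Real.pi : ℂ) * Complex.I * ((l.val : ℂ) - (j.val : ℂ)) / n)) ≠ 1 := by
      intro h
      rw [Complex.exp_eq_one_iff] at h
      obtain ⟨t, ht⟩ := h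
      have hpi : (Real.pi : ℂ) ≠ 0 := by exact_mod_cast Real.pi_ne_zero
      have h2πI : (2 * (Real.pi : ℂ) * Complex.I) ≠ 0 := by
        simp [Complex.I_ne_zero, hpi]
      have key : (2 * (Real.pi : ℂ) * Complex.I) * ((l.val : ℂ) - (j.val : ℂ))
          = (2 * (Real.pi : ℂ) * Complex.I) * ((t : ℂ) * n) := by
        field_simp at ht
        linear_combination (2 * (Real.pi : ℂ) * Complex.I) * ht
      have h2 : ((l.val : ℂ) - (j.val : ℂ)) = (t : ℂ) * n := mul_left_cancel₀ h2πI key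
      have h3 : (l.val : ℤ) - (j.val : ℤ) = t * n := by exact_mod_cast h2
      have hd : ((n : ℤ)) ∣ ((l.val : ℤ) - (j.val : ℤ)) := ⟨t, by rw [h3, mul_comm]⟩
      have hz : ((l.val : ℤ) - (j.val : ℤ)) = 0 := by
        refine Int.eq_zero_of_dvd_of_natAbs_lt_natAbs hd ?_
        have hj := j.isLt; have hl := l.isLt
        simp only [Int.natAbs_natCast]
        omega
      have hne2 : l.val ≠ j.val := fun h => hjl (Fin.ext h.symm)
      omega
    rw [geom_sum_eq hζ1, hζn]
    simp [Matrix.one_apply, hjl]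

/-- F-pooling is anti-aliasing — the DFT coefficients of P̄Px with index
μ ≤ k < n − μ all vanish. -/
theorem stmt_8 (n m μ : ℕ) (hn : 0 < n) (hm : 0 < m) (hmμ : m = 2 * μ) (hmn : m < n)
    (x : Fin n → ℂ) (k : Fin n) (hk₁ : μ ≤ k.val) (hk₂ : k.val < n - μ) :
    (dftMatrix n *ᵥ (fpoolInv n m μ *ᵥ (fpool n m μ *ᵥ x))) k = 0 := by
  have hrow : ∀ i : Fin m, selD n m μ i k = 0 := by
    intro i
    have hi := i.isLt
    simp only [selD, Matrix.of_apply]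
    rw [if_neg]
    rintro (⟨h1, h2⟩ | ⟨h1, h2⟩) <;> omega
  have hDF : dftMatrix n * fpoolInv n m μ
      = ((n : ℂ) / m) • ((selD n m μ)ᵀ * dftMatrix m) := by
    unfold fpoolInv
    rw [Matrix.mul_smul, ← Matrix.mul_assoc, ← Matrix.mul_assoc, dft_mul_conjT n hn,
      Matrix.smul_mul, Matrix.one_mul, Matrix.smul_mul, smul_smul]
    congr 1
    ring
  have hz : ∀ z : Fin m → ℂ, ((selD n m μ)ᵀ *ᵥ z) k = 0 := by
    intro z
    simp [Matrix.mulVec, dotProduct, Matrix.transpose_apply, hrow]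
  rw [Matrix.mulVec_mulVec, hDF, Matrix.smul_mulVec, ← Matrix.mulVec_mulVec]
  rw [Pi.smul_apply, hz, smul_zero]
end

section
/- (Odd padding makes the even-size output real) Let n, m be positive integers with m even, m = 2μ, and m < n. For x ∈ ℝ^n, let x̂ = F_n x and define v ∈ ℂ^m by v_k = x̂_k for 0 ≤ k < μ, v_μ = 0, and v_k = x̂_{k + n − m} for μ < k < m. Then every entry of (1/n) F_m* v ∈ ℂ^m has zero imaginary part. -/
open Matrix Complex Finset

noncomputable def Efun (N : ℕ) (t : ℤ) : ℂ :=
  Complex.exp (2 * (Real.pi : ℂ) * Complex.I * (t : ℂ) / (N : ℂ))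

lemma dft_apply (N : ℕ) (j k : Fin N) :
    dftMatrix N j k = Efun N (-((j.val : ℤ) * (k.val : ℤ))) := by
  simp only [dftMatrix, Efun, Matrix.of_apply]
  congr 1
  push_cast
  ring

lemma conj_Efun (N : ℕ) (t : ℤ) :
    (starRingEnd ℂ) (Efun N t) = Efun N (-t) := by
  rw [Efun, Efun, ← Complex.exp_conj]
  congr 1
  simp only [map_div₀, _root_.map_mul, Complex.conj_I, map_ofNat, Complex.conj_ofReal,
    map_intCast, map_natCast]
  push_cast
  ring

lemma Efun_congr (N : ℕ) (hN : 0 < N) {t s : ℤ} (h : (N : ℤ) ∣ (t - s)) :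
    Efun N t = Efun N s := by
  obtain ⟨c, hc⟩ := h
  have hN' : (N : ℂ) ≠ 0 := Nat.cast_ne_zero.mpr hN.ne'
  have ht : (t : ℂ) = (s : ℂ) + (c : ℂ) * (N : ℂ) := by
    have : t = s + N * c := by linarith
    rw [this]; push_cast; ring
  have : Efun N t = Efun N s * Complex.exp ((c : ℂ) * (2 * (Real.pi : ℂ) * Complex.I)) := by
    rw [Efun, Efun, ← Complex.exp_add]
    congr 1
    rw [ht]
    field_simp
  rw [this, Complex.exp_int_mul_two_pi_mul_I, mul_one]

lemma dft_neg (m : ℕ) (j k : Fin m) :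
    dftMatrix m (-j) k = (starRingEnd ℂ) (dftMatrix m j k) := by
  have hm : 0 < m := j.pos
  rw [dft_apply, dft_apply, conj_Efun, neg_neg]
  apply Efun_congr m hm
  have hv : ((-j).val : ℤ) = ((m - j.val) % m : ℕ) := by rw [Fin.coe_neg]
  rcases Nat.eq_zero_or_pos j.val with h0 | h0
  · refine ⟨0, ?_⟩
    rw [hv, h0]
    simp
  · have : (m - j.val) % m = m - j.val := Nat.mod_eq_of_lt (by omega)
    refine ⟨-(k.val : ℤ), ?_⟩
    rw [hv, this]
    have hj := j.isLt
    push_cast [Nat.cast_sub (le_of_lt j.isLt)]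
    ring

lemma conj_hat (n : ℕ) (hn : 0 < n) (x : Fin n → ℝ) (a b : Fin n)
    (hab : ((a.val : ℤ) + (b.val : ℤ)) % (n : ℤ) = 0) :
    (starRingEnd ℂ) ((dftMatrix n *ᵥ fun j : Fin n => (x j : ℂ)) a)
      = (dftMatrix n *ᵥ fun j : Fin n => (x j : ℂ)) b := by
  simp only [Matrix.mulVec, dotProduct]
  rw [map_sum]
  refine Finset.sum_congr rfl fun t _ => ?_
  rw [_root_.map_mul, Complex.conj_ofReal, dft_apply, dft_apply, conj_Efun, neg_neg]
  congr 1
  apply Efun_congr n hn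
  obtain ⟨c, hc⟩ := Int.dvd_of_emod_eq_zero hab
  exact ⟨c * t.val, by rw [sub_neg_eq_add, ← add_mul, hc]; ring⟩

/-- odd padding (zeroing the frequency at index μ) makes the even-size
output of a real input real. -/
theorem stmt_16 (n m μ : ℕ) (hn : 0 < n) (hm : 0 < m) (hμ : 0 < μ) (hmμ : m = 2 * μ)
    (hmn : m < n) (x : Fin n → ℝ) (v : Fin m → ℂ)
    (hv₁ : ∀ k : Fin m, ∀ h : k.val < μ,
      v k = (dftMatrix n *ᵥ fun j : Fin n => (x j : ℂ)) ⟨k.val, by omega⟩)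
    (hv₂ : ∀ k : Fin m, k.val = μ → v k = 0)
    (hv₃ : ∀ k : Fin m, ∀ _ : μ < k.val,
      v k = (dftMatrix n *ᵥ fun j : Fin n => (x j : ℂ))
        ⟨k.val + n - m, by have := k.isLt; omega⟩)
    (k : Fin m) :
    (((1 / (n : ℂ)) • ((dftMatrix m)ᴴ *ᵥ v)) k).im = 0 := by
  have conj_v : ∀ j : Fin m, (starRingEnd ℂ) (v (-j)) = v j := by
    intro j
    have hjlt := j.isLt
    rcases Nat.lt_trichotomy j.val μ with hj | hj | hj
    · rcases Nat.eq_zero_or_pos j.val with h0 | h0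
      · have hnegj : (-j) = j := by
          apply Fin.ext
          rw [Fin.coe_neg, h0]; simp
        rw [hnegj, hv₁ j hj]
        exact conj_hat n hn x _ ⟨j.val, by omega⟩ (by rw [h0]; simp)
      · have hneg : (-j).val = m - j.val := by
          rw [Fin.coe_neg]; exact Nat.mod_eq_of_lt (by omega)
        rw [hv₃ (-j) (by omega), hv₁ j hj]
        have hidx : (-j).val + n - m = n - j.val := by omega
        have : ((⟨(-j).val + n - m, by omega⟩ : Fin n) : Fin n)
            = ⟨n - j.val, by omega⟩ := Fin.ext hidx
        rw [this]
        exact conj_hat n hn x ⟨n - j.val, by omega⟩ ⟨j.val, by omega⟩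
          (by have : ((n - j.val : ℕ) : ℤ) + (j.val : ℤ) = n := by omega
              rw [this]; simp)
    · have hnegj : (-j) = j := by
        apply Fin.ext
        rw [Fin.coe_neg]
        rw [Nat.mod_eq_of_lt (by omega)]
        omega
      rw [hnegj, hv₂ j hj]
      simp
    · have hneg : (-j).val = m - j.val := by
        rw [Fin.coe_neg]; exact Nat.mod_eq_of_lt (by omega)
      rw [hv₁ (-j) (by omega), hv₃ j hj]
      have : ((⟨(-j).val, by omega⟩ : Fin n) : Fin n) = ⟨m - j.val, by omega⟩ :=
        Fin.ext hneg
      rw [this]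
      exact conj_hat n hn x ⟨m - j.val, by omega⟩ ⟨j.val + n - m, by omega⟩
        (by have : ((m - j.val : ℕ) : ℤ) + ((j.val + n - m : ℕ) : ℤ) = n := by omega
            rw [this]; simp)
  have key : (starRingEnd ℂ) (((dftMatrix m)ᴴ *ᵥ v) k) = ((dftMatrix m)ᴴ *ᵥ v) k := by
    simp only [Matrix.mulVec, dotProduct, Matrix.conjTranspose_apply, RCLike.star_def]
    rw [map_sum]
    rw [← Equiv.sum_comp (Equiv.neg (Fin m))
      (fun j => (starRingEnd ℂ) ((starRingEnd ℂ) (dftMatrix m j k) * v j))]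
    refine Finset.sum_congr rfl fun j _ => ?_
    simp only [Equiv.neg_apply]
    rw [_root_.map_mul, Complex.conj_conj, dft_neg, conj_v]
  have him : (((dftMatrix m)ᴴ *ᵥ v) k).im = 0 := Complex.conj_eq_iff_im.mp key
  simp only [Pi.smul_apply, smul_eq_mul, Complex.mul_im, him, mul_zero]
  simp
end
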